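/- Let t₁, t₂ be positive integers, n, k ≥ 0 integers. Let h ∈ ℝ[x,y] be quasi-homogeneous of type t = (t₁,t₂) and degree n + t₁ + t₂ with h ≠ 0, let μ be quasi-homogeneous of type t and degree n, and set F_n := X_h + μ·D₀. Let Δ be a linear subspace of P^t_{k+t₁+t₂} such that P^t_{k+t₁+t₂} = Δ ⊕ h·P^t_{k−n} (direct sum of subspaces). Then every quasi-homogeneous vector field (P,Q) of type t and degree k (i.e. P ∈ P^t_{k+t₁}, Q ∈ P^t_{k+t₂}) can be written uniquely as (P,Q) = X_g + η·D₀ + λ·F_n with g ∈ Δ, η ∈ P^t_k and λ ∈ P^t_{k−n}. -/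

import Mathlib

open MvPolynomial

/-- A polynomial in two variables is quasi-homogeneous of type `(t₁,t₂)` and
(integer) degree `k` if every monomial `x^a y^b` occurring in it satisfies
`t₁a + t₂b = k`.  (For `k < 0` only the zero polynomial qualifies.) -/
def IsQHZ (t₁ t₂ : ℕ) (k : ℤ) (p : MvPolynomial (Fin 2) ℝ) : Prop :=
  ∀ m ∈ p.support, (t₁ : ℤ) * m 0 + (t₂ : ℤ) * m 1 = k

/-!
Wedging with the Euler field `D₀` kills `η • D₀` and, by Euler's identity, sends `X_g` to
`(deg g) • g`; hence `D₀ ∧ (X_g + η D₀ + λ F_n) = (k + t₁ + t₂) g + h (n + t₁ + t₂) λ`, and the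
splitting `Δ ⊕ h Pᵗ_{k-n}` of `D₀ ∧ (P, Q)` determines `g` and `λ`, after which `η` is read off
from the first component. Conversely, Euler's identity shows that every quasi-homogeneous field
`R` of degree `k` satisfies `(k + t₁ + t₂) R = X_{D₀ ∧ R} + (div R) D₀`; applied to
`R = (P, Q) - λ F_n` this produces the decomposition.
-/

namespace MvPolynomial.IsWeightedHomogeneous

variable {σ R : Type*} [CommRing R] [Fintype σ] {w : σ → ℤ} {m : ℤ} {φ : MvPolynomial σ R}

theorem sum_intCast_weight_X_mul_pderiv (h : φ.IsWeightedHomogeneous w m) :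
    ∑ i, (w i : R) • (X i * pderiv i φ) = (m : R) • φ := by
  induction h using IsWeightedHomogeneous.induction_on with
  | zero => simp
  | add p q _ _ hp hq => simp only [map_add, mul_add, smul_add, Finset.sum_add_distrib, hp, hq]
  | monomial d r hd =>
    rw [← hd, Finsupp.weight_apply,
      Finsupp.sum_fintype d (fun i (c : ℕ) => c • w i) (fun _ => zero_smul _ _), Int.cast_sum,
      Finset.sum_smul]
    refine Finset.sum_congr rfl fun i _ => ?_
    rw [X_mul_pderiv_monomial, ← Nat.cast_smul_eq_nsmul R, smul_smul, nsmul_eq_mul,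
      Int.cast_mul, Int.cast_natCast, mul_comm]

end MvPolynomial.IsWeightedHomogeneous

abbrev qhWeight (t₁ t₂ : ℕ) : Fin 2 → ℤ := ![t₁, t₂]

theorem isQHZ_iff_isWeightedHomogeneous {t₁ t₂ : ℕ} {d : ℤ} {p : MvPolynomial (Fin 2) ℝ} :
    IsQHZ t₁ t₂ d p ↔ p.IsWeightedHomogeneous (qhWeight t₁ t₂) d := by
  refine forall_congr' fun m => ?_
  rw [mem_support_iff, Finsupp.weight_apply, Finsupp.sum_fintype _ _ (by simp), Fin.sum_univ_two]
  simp [mul_comm]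

theorem MvPolynomial.IsWeightedHomogeneous.sum_qhWeight_X_mul_pderiv {R : Type*} [CommRing R]
    {t₁ t₂ : ℕ} {m : ℤ} {f : MvPolynomial (Fin 2) R} (hf : f.IsWeightedHomogeneous (qhWeight t₁ t₂) m) :
    C (t₁ : R) * X 0 * pderiv 0 f + C (t₂ : R) * X 1 * pderiv 1 f = C (m : R) * f := by
  have := hf.sum_intCast_weight_X_mul_pderiv
  simp only [Fin.sum_univ_two, smul_eq_C_mul] at this
  simpa [mul_assoc] using this

abbrev PolyVectorField (R : Type*) [CommRing R] := MvPolynomial (Fin 2) R × MvPolynomial (Fin 2) R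

noncomputable section

namespace PolyVectorField

variable {R : Type*} [CommRing R] {t₁ t₂ : ℕ}

def hamiltonian (g : MvPolynomial (Fin 2) R) : PolyVectorField R := (-pderiv 1 g, pderiv 0 g)

def euler (t₁ t₂ : ℕ) : PolyVectorField R := (C (t₁ : R) * X 0, C (t₂ : R) * X 1)

def wedge (v w : PolyVectorField R) : MvPolynomial (Fin 2) R := v.1 * w.2 - v.2 * w.1

def divergence (v : PolyVectorField R) : MvPolynomial (Fin 2) R := pderiv 0 v.1 + pderiv 1 v.2

def IsQuasiHomogeneous (t₁ t₂ : ℕ) (k : ℤ) (v : PolyVectorField R) : Prop :=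
  v.1.IsWeightedHomogeneous (qhWeight t₁ t₂) (k + t₁) ∧
    v.2.IsWeightedHomogeneous (qhWeight t₁ t₂) (k + t₂)

/-- `X_g + η D₀ + λ F_n` with `F_n = X_h + μ D₀`, for `u = (g, η, λ)`. -/
def combine (t₁ t₂ : ℕ) (h μ : MvPolynomial (Fin 2) R)
    (u : MvPolynomial (Fin 2) R × MvPolynomial (Fin 2) R × MvPolynomial (Fin 2) R) :
    PolyVectorField R :=
  hamiltonian u.1 + u.2.1 • euler t₁ t₂ + u.2.2 • (hamiltonian h + μ • euler t₁ t₂)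

section QuasiHomogeneity

variable {k d : ℤ} {v w : PolyVectorField R} {f g : MvPolynomial (Fin 2) R}

theorem IsQuasiHomogeneous.add (hv : IsQuasiHomogeneous t₁ t₂ k v)
    (hw : IsQuasiHomogeneous t₁ t₂ k w) : IsQuasiHomogeneous t₁ t₂ k (v + w) :=
  ⟨hv.1.add hw.1, hv.2.add hw.2⟩

theorem IsQuasiHomogeneous.sub (hv : IsQuasiHomogeneous t₁ t₂ k v)
    (hw : IsQuasiHomogeneous t₁ t₂ k w) : IsQuasiHomogeneous t₁ t₂ k (v - w) :=
  ⟨hv.1.sub hw.1, hv.2.sub hw.2⟩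

theorem IsQuasiHomogeneous.smul (hv : IsQuasiHomogeneous t₁ t₂ k v)
    (hf : f.IsWeightedHomogeneous (qhWeight t₁ t₂) d) :
    IsQuasiHomogeneous t₁ t₂ (d + k) (f • v) := by
  constructor <;> rw [add_assoc]
  exacts [hf.mul hv.1, hf.mul hv.2]

theorem isQuasiHomogeneous_euler :
    IsQuasiHomogeneous t₁ t₂ 0 (euler t₁ t₂ : PolyVectorField R) := by
  constructor <;> rw [zero_add]
  exacts [(isWeightedHomogeneous_X R _ 0).C_mul _, (isWeightedHomogeneous_X R _ 1).C_mul _]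

theorem isQuasiHomogeneous_hamiltonian
    (hg : g.IsWeightedHomogeneous (qhWeight t₁ t₂) (k + t₁ + t₂)) :
    IsQuasiHomogeneous t₁ t₂ k (hamiltonian g) :=
  ⟨(hg.pderiv (by simp)).neg, hg.pderiv (by simp; ring)⟩

theorem IsQuasiHomogeneous.isWeightedHomogeneous_wedge_euler (hv : IsQuasiHomogeneous t₁ t₂ k v) :
    (wedge (euler t₁ t₂) v).IsWeightedHomogeneous (qhWeight t₁ t₂) (k + t₁ + t₂) := by
  refine IsWeightedHomogeneous.sub ?_ ?_
  · convert isQuasiHomogeneous_euler.1.mul hv.2 using 1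
    ring
  · convert isQuasiHomogeneous_euler.2.mul hv.1 using 1
    ring

theorem IsQuasiHomogeneous.isWeightedHomogeneous_divergence (hv : IsQuasiHomogeneous t₁ t₂ k v) :
    (divergence v).IsWeightedHomogeneous (qhWeight t₁ t₂) k :=
  (hv.1.pderiv (by simp)).add (hv.2.pderiv (by simp))

end QuasiHomogeneity

section Identities

variable {k a b : ℤ} {v : PolyVectorField R} {g h μ : MvPolynomial (Fin 2) R}

theorem wedge_euler_hamiltonian (hg : g.IsWeightedHomogeneous (qhWeight t₁ t₂) a) :
    wedge (euler t₁ t₂) (hamiltonian g) = C (a : R) * g := by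
  rw [← hg.sum_qhWeight_X_mul_pderiv]
  simp only [wedge, euler, hamiltonian]
  ring

theorem wedge_euler_combine
    {u : MvPolynomial (Fin 2) R × MvPolynomial (Fin 2) R × MvPolynomial (Fin 2) R}
    (hg : u.1.IsWeightedHomogeneous (qhWeight t₁ t₂) a)
    (hh : h.IsWeightedHomogeneous (qhWeight t₁ t₂) b) :
    wedge (euler t₁ t₂) (combine t₁ t₂ h μ u) = C (a : R) * u.1 + h * (C (b : R) * u.2.2) := by
  have Eg := wedge_euler_hamiltonian hg
  have Eh := wedge_euler_hamiltonian hh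
  simp only [wedge, combine, Prod.fst_add, Prod.snd_add, Prod.smul_fst, Prod.smul_snd,
    smul_eq_mul] at *
  linear_combination Eg + u.2.2 * Eh

theorem IsQuasiHomogeneous.C_smul_eq_hamiltonian_add_divergence_smul
    (hv : IsQuasiHomogeneous t₁ t₂ k v) :
    (C ((k + t₁ + t₂ : ℤ) : R) : MvPolynomial (Fin 2) R) • v =
      hamiltonian (wedge (euler t₁ t₂) v) + divergence v • euler t₁ t₂ := by
  have E₁ := hv.1.sum_qhWeight_X_mul_pderiv
  have E₂ := hv.2.sum_qhWeight_X_mul_pderiv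
  push_cast at E₁ E₂ ⊢
  ext : 1 <;> simp only [hamiltonian, wedge, divergence, euler, Prod.fst_add, Prod.snd_add,
    Prod.smul_fst, Prod.smul_snd, smul_eq_mul, map_sub, map_add, Derivation.leibniz, pderiv_C,
    pderiv_X_self, pderiv_X_of_ne (by decide : (0 : Fin 2) ≠ 1),
    pderiv_X_of_ne (by decide : (1 : Fin 2) ≠ 0)] at E₁ E₂ ⊢
  · linear_combination -E₁
  · linear_combination -E₂

end Identities

section Decomposition

variable {𝕜 : Type*} [Field 𝕜] {t₁ t₂ : ℕ} {k n : ℤ} {h μ : MvPolynomial (Fin 2) 𝕜}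
  {Δ : Submodule 𝕜 (MvPolynomial (Fin 2) 𝕜)} {v : PolyVectorField 𝕜}

theorem exists_combine_eq (hK : ((k + t₁ + t₂ : ℤ) : 𝕜) ≠ 0) (hN : ((n + t₁ + t₂ : ℤ) : 𝕜) ≠ 0)
    (hh : h.IsWeightedHomogeneous (qhWeight t₁ t₂) (n + t₁ + t₂))
    (hμ : μ.IsWeightedHomogeneous (qhWeight t₁ t₂) n) (hv : IsQuasiHomogeneous t₁ t₂ k v)
    (hsplit : ∃ gq : MvPolynomial (Fin 2) 𝕜 × MvPolynomial (Fin 2) 𝕜, gq.1 ∈ Δ ∧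
      gq.2.IsWeightedHomogeneous (qhWeight t₁ t₂) (k - n) ∧
      wedge (euler t₁ t₂) v = gq.1 + h * gq.2) :
    ∃ u : MvPolynomial (Fin 2) 𝕜 × MvPolynomial (Fin 2) 𝕜 × MvPolynomial (Fin 2) 𝕜,
      u.1 ∈ Δ ∧ u.2.1.IsWeightedHomogeneous (qhWeight t₁ t₂) k ∧
      u.2.2.IsWeightedHomogeneous (qhWeight t₁ t₂) (k - n) ∧ combine t₁ t₂ h μ u = v := by
  obtain ⟨⟨g₀, q⟩, hg₀, hq, hsplit⟩ := hsplit
  set K : 𝕜 := ((k + t₁ + t₂ : ℤ) : 𝕜)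
  set N : 𝕜 := ((n + t₁ + t₂ : ℤ) : 𝕜)
  set F := hamiltonian h + μ • euler t₁ t₂
  have hF : IsQuasiHomogeneous t₁ t₂ n F :=
    (isQuasiHomogeneous_hamiltonian hh).add (by simpa using isQuasiHomogeneous_euler.smul hμ)
  have hlam := hq.C_mul N⁻¹
  set r := v - (C N⁻¹ * q) • F with hr_def
  have hr : IsQuasiHomogeneous t₁ t₂ k r := hv.sub (by simpa using hF.smul hlam)
  have hwedge : wedge (euler t₁ t₂) r = g₀ := by
    have Eh := wedge_euler_hamiltonian hh
    have hNN : C N⁻¹ * C N = (1 : MvPolynomial (Fin 2) 𝕜) := by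
      rw [← map_mul, inv_mul_cancel₀ hN, map_one]
    simp only [r, F, wedge, euler, Prod.fst_add, Prod.snd_add, Prod.fst_sub, Prod.snd_sub,
      Prod.smul_fst, Prod.smul_snd, smul_eq_mul] at Eh hsplit ⊢
    linear_combination hsplit - C N⁻¹ * q * Eh - q * h * hNN
  have hdecomp : (C K : MvPolynomial (Fin 2) 𝕜) • r =
      hamiltonian g₀ + divergence r • euler t₁ t₂ :=
    hwedge ▸ hr.C_smul_eq_hamiltonian_add_divergence_smul
  refine ⟨(K⁻¹ • g₀, C K⁻¹ * divergence r, C N⁻¹ * q), Δ.smul_mem _ hg₀,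
    hr.isWeightedHomogeneous_divergence.C_mul _, hlam, ?_⟩
  calc combine t₁ t₂ h μ (K⁻¹ • g₀, C K⁻¹ * divergence r, C N⁻¹ * q)
      = (C K⁻¹ : MvPolynomial (Fin 2) 𝕜) • (hamiltonian g₀ + divergence r • euler t₁ t₂) +
          (C N⁻¹ * q) • F := by
        ext : 1 <;> simp only [combine, hamiltonian, F, smul_eq_C_mul, pderiv_C_mul, Prod.fst_add,
          Prod.snd_add, Prod.smul_fst, Prod.smul_snd, smul_eq_mul] <;> ring
    _ = v := by
        rw [← hdecomp, smul_smul, ← map_mul, inv_mul_cancel₀ hK, map_one, one_smul, hr_def,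
          sub_add_cancel]

theorem eq_of_combine_eq (hK : ((k + t₁ + t₂ : ℤ) : 𝕜) ≠ 0) (hN : ((n + t₁ + t₂ : ℤ) : 𝕜) ≠ 0)
    (ht₁ : (t₁ : 𝕜) ≠ 0) (hΔ : ∀ g ∈ Δ, g.IsWeightedHomogeneous (qhWeight t₁ t₂) (k + t₁ + t₂))
    (hh : h.IsWeightedHomogeneous (qhWeight t₁ t₂) (n + t₁ + t₂))
    (hsplit : ∃! gq : MvPolynomial (Fin 2) 𝕜 × MvPolynomial (Fin 2) 𝕜, gq.1 ∈ Δ ∧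
      gq.2.IsWeightedHomogeneous (qhWeight t₁ t₂) (k - n) ∧
      wedge (euler t₁ t₂) v = gq.1 + h * gq.2)
    {u u' : MvPolynomial (Fin 2) 𝕜 × MvPolynomial (Fin 2) 𝕜 × MvPolynomial (Fin 2) 𝕜}
    (hu : u.1 ∈ Δ ∧ u.2.2.IsWeightedHomogeneous (qhWeight t₁ t₂) (k - n) ∧
      combine t₁ t₂ h μ u = v)
    (hu' : u'.1 ∈ Δ ∧ u'.2.2.IsWeightedHomogeneous (qhWeight t₁ t₂) (k - n) ∧
      combine t₁ t₂ h μ u' = v) :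
    u = u' := by
  set K : 𝕜 := ((k + t₁ + t₂ : ℤ) : 𝕜)
  set N : 𝕜 := ((n + t₁ + t₂ : ℤ) : 𝕜)
  have split_of {w : MvPolynomial (Fin 2) 𝕜 × MvPolynomial (Fin 2) 𝕜 × MvPolynomial (Fin 2) 𝕜}
      (hw : w.1 ∈ Δ ∧ w.2.2.IsWeightedHomogeneous (qhWeight t₁ t₂) (k - n) ∧
        combine t₁ t₂ h μ w = v) :
      K • w.1 ∈ Δ ∧ (C N * w.2.2).IsWeightedHomogeneous (qhWeight t₁ t₂) (k - n) ∧
        wedge (euler t₁ t₂) v = K • w.1 + h * (C N * w.2.2) := by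
    obtain ⟨hw₁, hw₂, rfl⟩ := hw
    exact ⟨Δ.smul_mem _ hw₁, hw₂.C_mul _, by
      rw [wedge_euler_combine (hΔ _ hw₁) hh, smul_eq_C_mul]⟩
  have hsame := hsplit.unique (y₁ := (K • u.1, C N * u.2.2)) (y₂ := (K • u'.1, C N * u'.2.2))
    (split_of hu) (split_of hu')
  simp only [Prod.mk.injEq] at hsame
  have hg : u.1 = u'.1 := smul_right_injective _ hK hsame.1
  have hl : u.2.2 = u'.2.2 := mul_left_cancel₀ (C_ne_zero.mpr hN) hsame.2
  have hη : u.2.1 = u'.2.1 := by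
    have hfst := congrArg Prod.fst (hu.2.2.trans hu'.2.2.symm)
    simp only [combine, hg, hl, Prod.fst_add, Prod.smul_fst, smul_eq_mul, add_left_inj,
      add_right_inj] at hfst
    exact mul_right_cancel₀ (mul_ne_zero (C_ne_zero.mpr ht₁) (X_ne_zero 0)) hfst
  exact Prod.ext hg (Prod.ext hη hl)

theorem existsUnique_combine_eq (hK : ((k + t₁ + t₂ : ℤ) : 𝕜) ≠ 0)
    (hN : ((n + t₁ + t₂ : ℤ) : 𝕜) ≠ 0) (ht₁ : (t₁ : 𝕜) ≠ 0)
    (hΔ : ∀ g ∈ Δ, g.IsWeightedHomogeneous (qhWeight t₁ t₂) (k + t₁ + t₂))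
    (hh : h.IsWeightedHomogeneous (qhWeight t₁ t₂) (n + t₁ + t₂))
    (hμ : μ.IsWeightedHomogeneous (qhWeight t₁ t₂) n) (hv : IsQuasiHomogeneous t₁ t₂ k v)
    (hsplit : ∃! gq : MvPolynomial (Fin 2) 𝕜 × MvPolynomial (Fin 2) 𝕜, gq.1 ∈ Δ ∧
      gq.2.IsWeightedHomogeneous (qhWeight t₁ t₂) (k - n) ∧
      wedge (euler t₁ t₂) v = gq.1 + h * gq.2) :
    ∃! u : MvPolynomial (Fin 2) 𝕜 × MvPolynomial (Fin 2) 𝕜 × MvPolynomial (Fin 2) 𝕜,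
      u.1 ∈ Δ ∧ u.2.1.IsWeightedHomogeneous (qhWeight t₁ t₂) k ∧
      u.2.2.IsWeightedHomogeneous (qhWeight t₁ t₂) (k - n) ∧ combine t₁ t₂ h μ u = v :=
  existsUnique_of_exists_of_unique (exists_combine_eq hK hN hh hμ hv hsplit.exists)
    fun _ _ hu hu' ↦ eq_of_combine_eq hK hN ht₁ hΔ hh hsplit
      ⟨hu.1, hu.2.2.1, hu.2.2.2⟩ ⟨hu'.1, hu'.2.2.1, hu'.2.2.2⟩

end Decomposition

end PolyVectorField

end

theorem qh_vector_field_decomposition_general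
    (t₁ t₂ : ℕ) (ht₁ : 0 < t₁) (n k : ℕ)
    (h μ : MvPolynomial (Fin 2) ℝ)
    (hh : IsQHZ t₁ t₂ ((n : ℤ) + t₁ + t₂) h)
    (hμ : IsQHZ t₁ t₂ (n : ℤ) μ)
    (Δ : Submodule ℝ (MvPolynomial (Fin 2) ℝ))
    (hΔsub : ∀ g ∈ Δ, IsQHZ t₁ t₂ ((k : ℤ) + t₁ + t₂) g)
    (hdirect : ∀ p : MvPolynomial (Fin 2) ℝ, IsQHZ t₁ t₂ ((k : ℤ) + t₁ + t₂) p →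
      ∃! gq : MvPolynomial (Fin 2) ℝ × MvPolynomial (Fin 2) ℝ,
        gq.1 ∈ Δ ∧ IsQHZ t₁ t₂ ((k : ℤ) - n) gq.2 ∧ p = gq.1 + h * gq.2) :
    ∀ P Q : MvPolynomial (Fin 2) ℝ,
      IsQHZ t₁ t₂ ((k : ℤ) + t₁) P → IsQHZ t₁ t₂ ((k : ℤ) + t₂) Q →
      ∃! u : MvPolynomial (Fin 2) ℝ × MvPolynomial (Fin 2) ℝ × MvPolynomial (Fin 2) ℝ,
        u.1 ∈ Δ ∧ IsQHZ t₁ t₂ (k : ℤ) u.2.1 ∧ IsQHZ t₁ t₂ ((k : ℤ) - n) u.2.2 ∧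
        P = -(pderiv 1 u.1) + u.2.1 * (C (t₁ : ℝ) * X 0)
            + u.2.2 * (-(pderiv 1 h) + μ * (C (t₁ : ℝ) * X 0)) ∧
        Q = pderiv 0 u.1 + u.2.1 * (C (t₂ : ℝ) * X 1)
            + u.2.2 * (pderiv 0 h + μ * (C (t₂ : ℝ) * X 1)) := by
  intro P Q hP hQ
  simp only [isQHZ_iff_isWeightedHomogeneous] at *
  have hv : PolyVectorField.IsQuasiHomogeneous t₁ t₂ k (P, Q) := ⟨hP, hQ⟩
  have hK : ((k + t₁ + t₂ : ℤ) : ℝ) ≠ 0 := by positivity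
  have hN : ((n + t₁ + t₂ : ℤ) : ℝ) ≠ 0 := by positivity
  refine (existsUnique_congr fun u ↦ ?_).mp <|
    PolyVectorField.existsUnique_combine_eq hK hN (by positivity) hΔsub hh hμ hv
      (hdirect _ hv.isWeightedHomogeneous_wedge_euler)
  rw [eq_comm, Prod.ext_iff]
  rfl

/-- Conservative–dissipative–flow decomposition
`𝒬ₖ = 𝒞ₖ ⊕ 𝒟ₖ ⊕ ℱₖ`: every quasi-homogeneous vector field `(P,Q)` of type
`t` and degree `k` is uniquely `X_g + η·D₀ + λ·F_n` with `g ∈ Δ`, `η ∈ Pᵗₖ`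
and `λ ∈ Pᵗ_{k−n}`, provided `Pᵗ_{k+t₁+t₂} = Δ ⊕ h·Pᵗ_{k−n}`. -/
theorem qh_vector_field_decomposition
    (t₁ t₂ : ℕ) (ht₁ : 0 < t₁) (ht₂ : 0 < t₂) (n k : ℕ)
    (h μ : MvPolynomial (Fin 2) ℝ)
    (hh : IsQHZ t₁ t₂ ((n : ℤ) + t₁ + t₂) h) (hhne : h ≠ 0)
    (hμ : IsQHZ t₁ t₂ (n : ℤ) μ)
    (Δ : Submodule ℝ (MvPolynomial (Fin 2) ℝ))
    (hΔsub : ∀ g ∈ Δ, IsQHZ t₁ t₂ ((k : ℤ) + t₁ + t₂) g)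
    (hdirect : ∀ p : MvPolynomial (Fin 2) ℝ, IsQHZ t₁ t₂ ((k : ℤ) + t₁ + t₂) p →
      ∃! gq : MvPolynomial (Fin 2) ℝ × MvPolynomial (Fin 2) ℝ,
        gq.1 ∈ Δ ∧ IsQHZ t₁ t₂ ((k : ℤ) - n) gq.2 ∧ p = gq.1 + h * gq.2) :
    ∀ P Q : MvPolynomial (Fin 2) ℝ,
      IsQHZ t₁ t₂ ((k : ℤ) + t₁) P → IsQHZ t₁ t₂ ((k : ℤ) + t₂) Q →
      ∃! u : MvPolynomial (Fin 2) ℝ × MvPolynomial (Fin 2) ℝ × MvPolynomial (Fin 2) ℝ,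
        u.1 ∈ Δ ∧ IsQHZ t₁ t₂ (k : ℤ) u.2.1 ∧ IsQHZ t₁ t₂ ((k : ℤ) - n) u.2.2 ∧
        P = -(pderiv 1 u.1) + u.2.1 * (C (t₁ : ℝ) * X 0)
            + u.2.2 * (-(pderiv 1 h) + μ * (C (t₁ : ℝ) * X 0)) ∧
        Q = pderiv 0 u.1 + u.2.1 * (C (t₂ : ℝ) * X 1)
            + u.2.2 * (pderiv 0 h + μ * (C (t₂ : ℝ) * X 1)) :=
  qh_vector_field_decomposition_general t₁ t₂ ht₁ n k h μ hh hμ Δ hΔsub hdirect
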